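/- Let A ∈ ℝ^{m×n}, let δ, ε ∈ (0,1), and let s be a positive integer with s ≥ (n² + n)/(δ·ε²). Draw a random count sketch matrix S ∈ ℝ^{s×m} as follows: a function h : {1,…,m} → {1,…,s} with entries independent and uniformly distributed on {1,…,s}, and signs d : {1,…,m} → {−1,+1} with entries independent and uniformly distributed on {−1,+1}, all independent of each other; define S by S(i,j) = d(j) if h(j) = i and S(i,j) = 0 otherwise. Then with probability at least 1 − δ, the matrix S satisfies (1−ε)‖Ax‖₂² ≤ ‖SAx‖₂² ≤ (1+ε)‖Ax‖₂² for all x ∈ ℝⁿ. -/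

import Mathlib

open Matrix

/-- The Euclidean (ℓ₂) norm of a real vector. -/
noncomputable def e2norm {k : ℕ} (v : Fin k → ℝ) : ℝ := Real.sqrt (∑ i, (v i) ^ 2)

/-- The count sketch matrix determined by a hash function `h : {1,…,m} → {1,…,s}` and
signs `d : {1,…,m} → {−1,+1}` (encoded as `Bool`, `true ↦ +1`, `false ↦ −1`):
`S i j = d j` if `h j = i` and `0` otherwise. -/
def countSketch {m s : ℕ} (h : Fin m → Fin s) (d : Fin m → Bool) :
    Matrix (Fin s) (Fin m) ℝ :=
  fun i j => if h j = i then (if d j then 1 else -1) else 0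

/-!
Let `U` have orthonormal columns spanning the column space of `A`, so every `A x` is `U c`
with `‖U c‖ = ‖c‖`. Since `SᵀS = 1 + E`, where the collision matrix `E` has entries `d j d k`
for `j ≠ k` with `h j = h k` and `0` elsewhere, `‖S U c‖² - ‖U c‖² = cᵀ (Uᵀ E U) c`, which by
Cauchy–Schwarz is at most `‖c‖² ‖Uᵀ E U‖_F` in absolute value. So `S` is a `(1 ± ε)`-embedding
as soon as `‖Uᵀ E U‖_F² ≤ ε²`. The sign products `d j d k` of distinct unordered pairs are
orthogonal and two indices collide with probability `1/s`, so
`𝔼 (uᵀ E v)² ≤ (‖u‖²‖v‖² + ⟨u, v⟩²) / s` and `𝔼 ‖Uᵀ E U‖_F² ≤ (r² + r) / s ≤ δ ε²` for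
`r = rank A ≤ n`; Markov's inequality concludes.
-/

open Finset

theorem e2norm_sq {k : ℕ} (v : Fin k → ℝ) : e2norm v ^ 2 = v ⬝ᵥ v := by
  rw [e2norm, Real.sq_sqrt (sum_nonneg fun _ _ => sq_nonneg _)]
  simp [dotProduct, sq]

theorem one_sub_le_card_filter_div_card {Ω : Type*} [Fintype Ω] [Nonempty Ω] {P : Ω → Prop}
    [DecidablePred P] {T : Ω → ℝ} {t δ : ℝ} (ht : 0 < t) (hT : ∀ ω, 0 ≤ T ω)
    (hP : ∀ ω, T ω ≤ t → P ω) (hsum : ∑ ω, T ω ≤ Fintype.card Ω * δ * t) :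
    1 - δ ≤ (#{ω | P ω} : ℝ) / Fintype.card Ω := by
  have hbad : (#{ω | ¬P ω} : ℝ) * t ≤ ∑ ω, T ω :=
    calc (#{ω | ¬P ω} : ℝ) * t ≤ ∑ ω ∈ {ω | ¬P ω}, T ω := by
          simpa using card_nsmul_le_sum _ T t fun ω hω =>
            (not_le.mp (mt (hP ω) (mem_filter.mp hω).2)).le
      _ ≤ ∑ ω, T ω := sum_le_sum_of_subset_of_nonneg (subset_univ _) fun ω _ _ => hT ω
  have hsplit : (#{ω | P ω} : ℝ) + #{ω | ¬P ω} = Fintype.card Ω := by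
    exact_mod_cast card_filter_add_card_filter_not (s := univ) P
  rw [le_div_iff₀ (by exact_mod_cast Fintype.card_pos)]
  nlinarith

theorem Finset.sum_ite_eq_or_eq_swap {ι : Type*} [Fintype ι] [DecidableEq ι] {f : ι × ι → ℝ}
    {i : ι × ι} (hi : i.1 ≠ i.2) :
    ∑ i', (if i' = i ∨ i' = i.swap then f i' else 0) = f i + f i.swap := by
  have hswap : i ≠ i.swap := fun h => hi (congrArg Prod.snd h.symm)
  rw [← sum_filter, show ({i' | i' = i ∨ i' = i.swap} : Finset (ι × ι)) = {i, i.swap} by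
    ext; simp, sum_pair hswap]

theorem Finset.sum_sq_sum_mul_eq {ι Ω : Type*} [Fintype ι] [Fintype Ω] (a : ι → ℝ)
    (X : Ω → ι → ℝ) :
    ∑ ω, (∑ i, a i * X ω i) ^ 2 = ∑ i, ∑ i', a i * a i' * ∑ ω, X ω i * X ω i' := by
  calc ∑ ω, (∑ i, a i * X ω i) ^ 2 = ∑ ω, ∑ i, ∑ i', a i * a i' * (X ω i * X ω i') := by
        refine sum_congr rfl fun ω _ => ?_
        rw [sq, sum_mul_sum]
        exact sum_congr rfl fun _ _ => sum_congr rfl fun _ _ => by ring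
    _ = ∑ i, ∑ i', a i * a i' * ∑ ω, X ω i * X ω i' := by
        rw [sum_comm]
        refine sum_congr rfl fun i _ => ?_
        rw [sum_comm]
        simp only [mul_sum]

namespace Matrix

variable {ι κ : Type*} [Fintype ι]

theorem exists_orthonormal_columns_spanning_range [Fintype κ] [DecidableEq κ]
    (A : Matrix ι κ ℝ) :
    ∃ r ≤ Fintype.card κ, ∃ U : Matrix ι (Fin r) ℝ,
      Uᵀ * U = 1 ∧ ∀ x, ∃ c, A *ᵥ x = U *ᵥ c := by
  let V := LinearMap.range (toEuclideanLin A)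
  let b := stdOrthonormalBasis ℝ V
  refine ⟨Module.finrank ℝ V, ?_, of fun i k => (b k : EuclideanSpace ℝ ι) i, ?_, fun x => ?_⟩
  · simpa using LinearMap.finrank_range_le (toEuclideanLin A)
  · ext k l
    have := orthonormal_iff_ite.mp b.orthonormal k l
    rw [Submodule.coe_inner, PiLp.inner_apply] at this
    rw [mul_apply, one_apply, ← this]
    simp only [transpose_apply, of_apply, RCLike.inner_apply, conj_trivial]
    exact sum_congr rfl fun i _ => mul_comm _ _
  · let y : V := ⟨toEuclideanLin A (WithLp.toLp 2 x), LinearMap.mem_range_self _ _⟩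
    refine ⟨fun k => b.repr y k, funext fun i => ?_⟩
    have := congrArg (fun v : V => (v : EuclideanSpace ℝ ι) i) (b.sum_repr y)
    simp only [Submodule.coe_sum, Submodule.coe_smul, WithLp.ofLp_sum, Finset.sum_apply,
      WithLp.ofLp_smul, Pi.smul_apply, smul_eq_mul] at this
    simp only [mulVec, dotProduct, of_apply, mul_comm _ ((b.repr y).ofLp _), this]
    rfl

theorem transpose_mul_mul_apply (U : Matrix ι κ ℝ) (M : Matrix ι ι ℝ) (k l : κ) :
    (Uᵀ * M * U) k l = Uᵀ k ⬝ᵥ M *ᵥ Uᵀ l := by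
  rw [Matrix.mul_assoc]
  simp [mul_apply, dotProduct, mulVec]

variable [Fintype κ]

theorem dotProduct_mulVec_eq_sum_prod (u v : ι → ℝ) (M : Matrix ι ι ℝ) :
    u ⬝ᵥ M *ᵥ v = ∑ i : ι × ι, u i.1 * v i.2 * M i.1 i.2 := by
  rw [dot_mulVec_eq_sum_sum, sum_comm, Fintype.sum_prod_type]
  exact sum_congr rfl fun _ _ => sum_congr rfl fun _ _ => by ring

theorem sum_prod_mul_add_swap (u v : ι → ℝ) :
    ∑ i : ι × ι, u i.1 * v i.2 * (u i.1 * v i.2 + u i.2 * v i.1) =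
      (u ⬝ᵥ u) * (v ⬝ᵥ v) + (u ⬝ᵥ v) ^ 2 := by
  simp only [dotProduct, sq, sum_mul_sum, Fintype.sum_prod_type, ← sum_add_distrib]
  exact sum_congr rfl fun _ _ => sum_congr rfl fun _ _ => by ring

theorem sq_dotProduct_mulVec_le (M : Matrix κ κ ℝ) (c : κ → ℝ) :
    (c ⬝ᵥ M *ᵥ c) ^ 2 ≤ (c ⬝ᵥ c) ^ 2 * ∑ i : κ × κ, M i.1 i.2 ^ 2 := by
  have hc : ∑ i : κ × κ, (c i.1 * c i.2) ^ 2 = (c ⬝ᵥ c) ^ 2 := by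
    simp only [dotProduct, sq, sum_mul_sum, Fintype.sum_prod_type]
    exact sum_congr rfl fun _ _ => sum_congr rfl fun _ _ => by ring
  rw [dotProduct_mulVec_eq_sum_prod, ← hc]
  exact sum_mul_sq_le_sq_mul_sq _ _ _

theorem mulVec_dotProduct_mulVec_mulVec (U : Matrix ι κ ℝ) (M : Matrix ι ι ℝ) (c : κ → ℝ) :
    U *ᵥ c ⬝ᵥ M *ᵥ (U *ᵥ c) = c ⬝ᵥ (Uᵀ * M * U) *ᵥ c := by
  rw [← mulVec_mulVec, ← mulVec_mulVec, dotProduct_transpose_mulVec, dotProduct_comm]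

theorem abs_mulVec_dotProduct_mulVec_mulVec_le [DecidableEq κ] {U : Matrix ι κ ℝ}
    (hU : Uᵀ * U = 1) (M : Matrix ι ι ℝ) {ε : ℝ} (hε : 0 ≤ ε)
    (hM : ∑ i : κ × κ, (Uᵀ * M * U) i.1 i.2 ^ 2 ≤ ε ^ 2) (c : κ → ℝ) :
    |U *ᵥ c ⬝ᵥ M *ᵥ (U *ᵥ c)| ≤ ε * (U *ᵥ c ⬝ᵥ U *ᵥ c) := by
  have hnorm : U *ᵥ c ⬝ᵥ U *ᵥ c = c ⬝ᵥ c := by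
    rw [← dotProduct_transpose_mulVec, mulVec_mulVec, hU, one_mulVec]
  rw [mulVec_dotProduct_mulVec_mulVec, hnorm]
  refine abs_le_of_sq_le_sq ?_ (mul_nonneg hε (dotProduct_self_star_nonneg c))
  calc (c ⬝ᵥ (Uᵀ * M * U) *ᵥ c) ^ 2
      ≤ (c ⬝ᵥ c) ^ 2 * ∑ i : κ × κ, (Uᵀ * M * U) i.1 i.2 ^ 2 := sq_dotProduct_mulVec_le _ c
    _ ≤ (c ⬝ᵥ c) ^ 2 * ε ^ 2 := by gcongr
    _ = (ε * (c ⬝ᵥ c)) ^ 2 := by ring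

end Matrix

namespace CountSketch

def boolSign (b : Bool) : ℝ := if b then 1 else -1

theorem boolSign_mul_self (b : Bool) : boolSign b * boolSign b = 1 := by
  cases b <;> norm_num [boolSign]

theorem boolSign_not (b : Bool) : boolSign (!b) = -boolSign b := by
  cases b <;> simp [boolSign]

theorem countSketch_apply {m s : ℕ} (h : Fin m → Fin s) (d : Fin m → Bool) (i : Fin s)
    (j : Fin m) : countSketch h d i j = if h j = i then boolSign (d j) else 0 := rfl

variable {ι β : Type*} [DecidableEq ι] [DecidableEq β]

def collisionMatrix (h : ι → β) (d : ι → Bool) : Matrix ι ι ℝ :=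
  of fun j k => if j ≠ k ∧ h j = h k then boolSign (d j) * boolSign (d k) else 0

theorem countSketch_transpose_mul_self {m s : ℕ} (h : Fin m → Fin s) (d : Fin m → Bool) :
    (countSketch h d)ᵀ * countSketch h d = 1 + collisionMatrix h d := by
  ext j k
  by_cases hjk : j = k
  · subst hjk
    simp [mul_apply, countSketch_apply, collisionMatrix, boolSign_mul_self]
  · simp [mul_apply, countSketch_apply, collisionMatrix, hjk, ite_and, eq_comm]

theorem countSketch_mulVec_dotProduct_self {m s : ℕ} (h : Fin m → Fin s) (d : Fin m → Bool)
    (y : Fin m → ℝ) :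
    countSketch h d *ᵥ y ⬝ᵥ countSketch h d *ᵥ y = y ⬝ᵥ y + y ⬝ᵥ collisionMatrix h d *ᵥ y := by
  rw [← dotProduct_transpose_mulVec, mulVec_mulVec, countSketch_transpose_mul_self, add_mulVec,
    one_mulVec, dotProduct_add]

variable [Fintype ι]

def frobeniusDeviation {κ : Type*} [Fintype κ] (U : Matrix ι κ ℝ) (h : ι → β) (d : ι → Bool) :
    ℝ :=
  ∑ i : κ × κ, (Uᵀ * collisionMatrix h d * U) i.1 i.2 ^ 2

theorem frobeniusDeviation_nonneg {κ : Type*} [Fintype κ] (U : Matrix ι κ ℝ) (h : ι → β)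
    (d : ι → Bool) : 0 ≤ frobeniusDeviation U h d :=
  sum_nonneg fun _ _ => sq_nonneg _

theorem embedding_of_frobeniusDeviation_le {m s : ℕ} {κ : Type*} [Fintype κ] [DecidableEq κ]
    {U : Matrix (Fin m) κ ℝ} (hU : Uᵀ * U = 1) {ε : ℝ} (hε : 0 ≤ ε)
    {h : Fin m → Fin s} {d : Fin m → Bool}
    (hE : frobeniusDeviation U h d ≤ ε ^ 2) (c : κ → ℝ) :
    (1 - ε) * e2norm (U *ᵥ c) ^ 2 ≤ e2norm (countSketch h d *ᵥ (U *ᵥ c)) ^ 2 ∧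
      e2norm (countSketch h d *ᵥ (U *ᵥ c)) ^ 2 ≤ (1 + ε) * e2norm (U *ᵥ c) ^ 2 := by
  have hdev := abs_le.mp (abs_mulVec_dotProduct_mulVec_mulVec_le hU _ hε hE c)
  rw [e2norm_sq, e2norm_sq, countSketch_mulVec_dotProduct_self]
  constructor <;> linarith [hdev.1, hdev.2]

theorem sum_eq_zero_of_flip (t : ι) {f : (ι → Bool) → ℝ}
    (hf : ∀ d, f (Function.update d t (!d t)) = -f d) : ∑ d, f d = 0 := by
  have hflip : Function.Involutive fun d : ι → Bool => Function.update d t (!d t) := by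
    intro d; simp
  have := Equiv.sum_comp hflip.toPerm f
  simp only [Function.Involutive.coe_toPerm, hf, sum_neg_distrib] at this
  linarith

theorem sum_boolSign_mul_three_eq_zero {t a b c : ι} (ha : a ≠ t) (hb : b ≠ t) (hc : c ≠ t) :
    ∑ d : ι → Bool, boolSign (d t) * (boolSign (d a) * boolSign (d b) * boolSign (d c)) = 0 :=
  sum_eq_zero_of_flip t fun d => by
    simp only [Function.update_self, Function.update_of_ne ha, Function.update_of_ne hb,
      Function.update_of_ne hc, boolSign_not, neg_mul]

theorem sum_boolSign_mul_four {j k p q : ι} (hjk : j ≠ k) (hpq : p ≠ q) :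
    ∑ d : ι → Bool, boolSign (d j) * boolSign (d k) * (boolSign (d p) * boolSign (d q)) =
      if (p, q) = (j, k) ∨ (p, q) = (k, j) then (Fintype.card (ι → Bool) : ℝ) else 0 := by
  split_ifs with hmatch
  · have hone : ∀ d : ι → Bool,
        boolSign (d j) * boolSign (d k) * (boolSign (d p) * boolSign (d q)) = 1 := by
      intro d
      rcases hmatch with h | h <;> simp only [Prod.mk.injEq] at h <;> rw [h.1, h.2] <;>
        linear_combination boolSign (d k) * boolSign (d k) * boolSign_mul_self (d j) +
          boolSign_mul_self (d k)
    simp [hone]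
  · -- some index occurs exactly once, and flipping its sign negates the summand
    simp only [Prod.mk.injEq, not_or, not_and] at hmatch
    by_cases hjp : j = p
    · subst hjp
      exact (sum_congr rfl fun d _ => by ring).trans
        (sum_boolSign_mul_three_eq_zero (t := k) (a := j) (b := j) hjk hjk (hmatch.1 rfl))
    by_cases hjq : j = q
    · subst hjq
      exact (sum_congr rfl fun d _ => by ring).trans
        (sum_boolSign_mul_three_eq_zero (t := k) (a := j) (c := j) hjk
          (fun h => hmatch.2 h rfl) hjk)
    exact (sum_congr rfl fun d _ => by ring).trans
      (sum_boolSign_mul_three_eq_zero (t := j) (Ne.symm hjk) (Ne.symm hjp) (Ne.symm hjq))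

variable [Fintype β]

theorem card_mul_sum_collision {j k : ι} (hjk : j ≠ k) :
    (Fintype.card β : ℝ) * ∑ h : ι → β, (if h j = h k then 1 else 0) =
      Fintype.card (ι → β) := by
  let e := Equiv.piSplitAt j fun _ : ι => β
  have hcount : ∑ h : ι → β, (if h j = h k then (1 : ℝ) else 0) =
      Fintype.card ({i // i ≠ j} → β) := by
    rw [← e.symm.sum_comp, Fintype.sum_prod_type, sum_comm]
    simp [e, Equiv.piSplitAt_symm_apply, hjk.symm]
  rw [hcount, Fintype.card_congr e, Fintype.card_prod]
  push_cast; ring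

theorem card_mul_sum_collisionMatrix_mul (i i' : ι × ι) :
    (Fintype.card β : ℝ) * ∑ ω : (ι → β) × (ι → Bool),
        collisionMatrix ω.1 ω.2 i.1 i.2 * collisionMatrix ω.1 ω.2 i'.1 i'.2 =
      if i.1 ≠ i.2 ∧ (i' = i ∨ i' = i.swap) then
        (Fintype.card ((ι → β) × (ι → Bool)) : ℝ) else 0 := by
  obtain ⟨j, k⟩ := i
  obtain ⟨p, q⟩ := i'
  by_cases hjk : j = k
  · simp [collisionMatrix, hjk]
  by_cases hpq : p = q
  · rw [if_neg (by rintro ⟨-, h | h⟩ <;> simp only [Prod.ext_iff] at h <;> grind)]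
    simp [collisionMatrix, hpq]
  have hsplit : ∑ ω : (ι → β) × (ι → Bool),
      collisionMatrix ω.1 ω.2 j k * collisionMatrix ω.1 ω.2 p q =
        ∑ h : ι → β, (if h j = h k ∧ h p = h q then 1 else 0) *
          ∑ d : ι → Bool, boolSign (d j) * boolSign (d k) * (boolSign (d p) * boolSign (d q)) := by
    rw [Fintype.sum_prod_type]
    refine sum_congr rfl fun h _ => ?_
    rw [mul_sum]
    refine sum_congr rfl fun d _ => ?_
    simp only [collisionMatrix, of_apply, Ne, hjk, hpq, not_false_eq_true, true_and]
    split_ifs <;> simp_all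
  simp only [hsplit, sum_boolSign_mul_four hjk hpq, Prod.swap_prod_mk, Ne, hjk,
    not_false_eq_true, true_and]
  split_ifs with hmatch
  · have hsame : ∀ h : ι → β, (h j = h k ∧ h p = h q) ↔ h j = h k := by
      rcases hmatch with h | h <;> simp only [Prod.mk.injEq] at h <;> rw [h.1, h.2] <;>
        simp [eq_comm]
    simp only [hsame, ← sum_mul, ← mul_assoc, card_mul_sum_collision hjk, Fintype.card_prod]
    push_cast; ring
  · simp

theorem card_mul_sum_sq_dotProduct_collisionMatrix_mulVec_le (u v : ι → ℝ) :
    (Fintype.card β : ℝ) *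
        ∑ ω : (ι → β) × (ι → Bool), (u ⬝ᵥ collisionMatrix ω.1 ω.2 *ᵥ v) ^ 2 ≤
      Fintype.card ((ι → β) × (ι → Bool)) * ((u ⬝ᵥ u) * (v ⬝ᵥ v) + (u ⬝ᵥ v) ^ 2) := by
  set N : ℝ := (Fintype.card ((ι → β) × (ι → Bool)) : ℝ)
  set a : ι × ι → ℝ := fun i => u i.1 * v i.2
  have hpair : ∀ i : ι × ι, ∑ i', a i * a i' *
      (if i.1 ≠ i.2 ∧ (i' = i ∨ i' = i.swap) then N else 0) =
        if i.1 ≠ i.2 then N * (a i * (a i + a i.swap)) else 0 := fun i => by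
    split_ifs with hi
    · simp only [hi, Ne, not_false_eq_true, true_and, mul_ite, mul_zero,
        sum_ite_eq_or_eq_swap hi]
      ring
    · simp [hi]
  calc (Fintype.card β : ℝ) *
        ∑ ω : (ι → β) × (ι → Bool), (u ⬝ᵥ collisionMatrix ω.1 ω.2 *ᵥ v) ^ 2
      = (Fintype.card β : ℝ) *
          ∑ ω : (ι → β) × (ι → Bool), (∑ i, a i * collisionMatrix ω.1 ω.2 i.1 i.2) ^ 2 := by
        simp only [dotProduct_mulVec_eq_sum_prod]
        rfl
    _ = ∑ i, ∑ i', a i * a i' * ((Fintype.card β : ℝ) * ∑ ω : (ι → β) × (ι → Bool),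
          collisionMatrix ω.1 ω.2 i.1 i.2 * collisionMatrix ω.1 ω.2 i'.1 i'.2) := by
        rw [sum_sq_sum_mul_eq, mul_sum]
        refine sum_congr rfl fun i _ => ?_
        rw [mul_sum]
        exact sum_congr rfl fun _ _ => by ring
    _ = ∑ i, if i.1 ≠ i.2 then N * (a i * (a i + a i.swap)) else 0 := by
        simp only [card_mul_sum_collisionMatrix_mul]
        exact sum_congr rfl fun i _ => hpair i
    _ ≤ ∑ i, N * (a i * (a i + a i.swap)) := by
        gcongr with i
        split_ifs with hi
        · exact le_rfl
        · have : i.swap = i := Prod.ext (not_not.mp hi).symm (not_not.mp hi)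
          rw [this]
          exact mul_nonneg (Nat.cast_nonneg _) (by nlinarith [sq_nonneg (a i)])
    _ = N * ((u ⬝ᵥ u) * (v ⬝ᵥ v) + (u ⬝ᵥ v) ^ 2) := by
        rw [← mul_sum, ← sum_prod_mul_add_swap]
        rfl

theorem card_mul_sum_frobeniusDeviation_le {κ : Type*} [Fintype κ] [DecidableEq κ]
    {U : Matrix ι κ ℝ} (hU : Uᵀ * U = 1) :
    (Fintype.card β : ℝ) * ∑ ω : (ι → β) × (ι → Bool), frobeniusDeviation U ω.1 ω.2 ≤
      Fintype.card ((ι → β) × (ι → Bool)) * ((Fintype.card κ : ℝ) ^ 2 + Fintype.card κ) := by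
  set N : ℝ := (Fintype.card ((ι → β) × (ι → Bool)) : ℝ)
  have horth : ∀ k l, Uᵀ k ⬝ᵥ Uᵀ l = (1 : Matrix κ κ ℝ) k l := fun k l => by rw [← hU]; rfl
  calc (Fintype.card β : ℝ) * ∑ ω : (ι → β) × (ι → Bool), frobeniusDeviation U ω.1 ω.2
      = ∑ i : κ × κ, (Fintype.card β : ℝ) * ∑ ω : (ι → β) × (ι → Bool),
          (Uᵀ i.1 ⬝ᵥ collisionMatrix ω.1 ω.2 *ᵥ Uᵀ i.2) ^ 2 := by
        simp only [frobeniusDeviation, transpose_mul_mul_apply, ← mul_sum]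
        rw [sum_comm]
    _ ≤ ∑ i : κ × κ, N * ((Uᵀ i.1 ⬝ᵥ Uᵀ i.1) * (Uᵀ i.2 ⬝ᵥ Uᵀ i.2) + (Uᵀ i.1 ⬝ᵥ Uᵀ i.2) ^ 2) :=
        sum_le_sum fun i _ => card_mul_sum_sq_dotProduct_collisionMatrix_mulVec_le _ _
    _ = N * ((Fintype.card κ : ℝ) ^ 2 + Fintype.card κ) := by
        rw [← mul_sum, Fintype.sum_prod_type]
        congr 1
        simp [horth, one_apply, sum_add_distrib]
        ring

end CountSketch

open Classical in
theorem count_sketch_is_subspace_embedding_general {m n : ℕ}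
    (A : Matrix (Fin m) (Fin n) ℝ)
    (δ ε : ℝ) (hδ0 : 0 < δ) (hε0 : 0 < ε)
    (s : ℕ) (hs : 0 < s)
    (hsize : (s : ℝ) ≥ ((n : ℝ) ^ 2 + n) / (δ * ε ^ 2)) :
    (1 : ℝ) - δ ≤
      ((Finset.univ.filter (fun ω : (Fin m → Fin s) × (Fin m → Bool) =>
          ∀ x : Fin n → ℝ,
            (1 - ε) * e2norm (A.mulVec x) ^ 2 ≤
              e2norm ((countSketch ω.1 ω.2 * A).mulVec x) ^ 2 ∧
            e2norm ((countSketch ω.1 ω.2 * A).mulVec x) ^ 2 ≤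
              (1 + ε) * e2norm (A.mulVec x) ^ 2)).card : ℝ) /
        (Fintype.card ((Fin m → Fin s) × (Fin m → Bool)) : ℝ) := by
  obtain ⟨r, hrn, U, hU, hcol⟩ := A.exists_orthonormal_columns_spanning_range
  rw [Fintype.card_fin] at hrn
  have : Nonempty ((Fin m → Fin s) × (Fin m → Bool)) := ⟨fun _ => ⟨0, hs⟩, fun _ => true⟩
  refine one_sub_le_card_filter_div_card (t := ε ^ 2) (δ := δ) (by positivity)
    (T := fun ω => CountSketch.frobeniusDeviation U ω.1 ω.2)
    (fun _ => CountSketch.frobeniusDeviation_nonneg _ _ _)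
    (fun ω hω x => ?_) ?_
  · obtain ⟨c, hc⟩ := hcol x
    rw [← mulVec_mulVec, hc]
    exact CountSketch.embedding_of_frobeniusDeviation_le hU hε0.le hω c
  · have hmoment := CountSketch.card_mul_sum_frobeniusDeviation_le (β := Fin s) hU
    rw [Fintype.card_fin, Fintype.card_fin] at hmoment
    have hr : (r : ℝ) ^ 2 + r ≤ s * (δ * ε ^ 2) := by
      have : (r : ℝ) ≤ n := by exact_mod_cast hrn
      exact le_trans (by gcongr) ((div_le_iff₀ (by positivity)).mp hsize)
    have hN : (0 : ℝ) ≤ Fintype.card ((Fin m → Fin s) × (Fin m → Bool)) := Nat.cast_nonneg _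
    have hs' : (0 : ℝ) < s := by exact_mod_cast hs
    nlinarith [mul_le_mul_of_nonneg_left hr hN]

open Classical in
/-- Count sketch lemma: if `s ≥ (n² + n)/(δ ε²)`, then, with probability at least
`1 − δ` over the uniform (i.e. independent uniform entries) choice of the hash
function `h` and the signs `d`, the count sketch matrix `S` built from `(h, d)` is a
`(1 ± ε)` ℓ₂-subspace embedding for the column space of `A`. Here probability is
expressed as the proportion of outcomes in the finite product space. -/
theorem count_sketch_is_subspace_embedding {m n : ℕ}
    (A : Matrix (Fin m) (Fin n) ℝ)
    (δ ε : ℝ) (hδ0 : 0 < δ) (hδ1 : δ < 1) (hε0 : 0 < ε) (hε1 : ε < 1)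
    (s : ℕ) (hs : 0 < s)
    (hsize : (s : ℝ) ≥ ((n : ℝ) ^ 2 + n) / (δ * ε ^ 2)) :
    (1 : ℝ) - δ ≤
      ((Finset.univ.filter (fun ω : (Fin m → Fin s) × (Fin m → Bool) =>
          ∀ x : Fin n → ℝ,
            (1 - ε) * e2norm (A.mulVec x) ^ 2 ≤
              e2norm ((countSketch ω.1 ω.2 * A).mulVec x) ^ 2 ∧
            e2norm ((countSketch ω.1 ω.2 * A).mulVec x) ^ 2 ≤
              (1 + ε) * e2norm (A.mulVec x) ^ 2)).card : ℝ) /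
        (Fintype.card ((Fin m → Fin s) × (Fin m → Bool)) : ℝ) :=
  count_sketch_is_subspace_embedding_general A δ ε hδ0 hε0 s hs hsize
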